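/- Let G be a finite abelian group which is a T'_k-group for some integer k ≥ 1. Then G is an elementary abelian p-group for some prime p, or G ≅ C₄ (the cyclic group of order 4). -/

import Mathlib

open CategoryTheory

def Irr (G : Type) [Group G] [Fintype G] : Set (G → ℂ) :=
  {χ | ∃ V : FDRep ℂ G, Simple V ∧ χ = V.character}

noncomputable def charDeg (G : Type) [Group G] (χ : G → ℂ) : ℕ := Nat.floor (χ 1).re

def kerSet (G : Type) [Group G] (χ : G → ℂ) : Set G := {g | χ g = χ 1}

noncomputable def cod (G : Type) [Group G] [Fintype G] (χ : G → ℂ) : ℕ :=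
  Fintype.card G / (kerSet G χ).ncard / charDeg G χ

def codSet (G : Type) [Group G] [Fintype G] : Set ℕ := {d | ∃ χ ∈ Irr G, cod G χ = d}

noncomputable def codMult (G : Type) [Group G] [Fintype G] (d : ℕ) : ℕ :=
  {χ ∈ Irr G | cod G χ = d}.ncard

def IsTk' (G : Type) [Group G] [Fintype G] (k : ℕ) : Prop :=
  ∃ d₀ ∈ codSet G, codMult G d₀ = k ∧ ∀ d ∈ codSet G, d ≠ d₀ → codMult G d = 1


open CategoryTheory.Limits
set_option linter.unusedSectionVars false
set_option maxHeartbeats 1000000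

section aux
variable {G : Type} [Group G]

variable {G : Type} [Group G] [Fintype G]

/-- The 1-dimensional representation attached to `χ : G →* ℂˣ`. -/
noncomputable def homRep (χ : G →* ℂˣ) : Representation ℂ G ℂ where
  toFun g := (χ g : ℂ) • LinearMap.id
  map_one' := by simp [Module.End.one_eq_id]
  map_mul' g h := by
    ext x
    simp [Module.End.mul_apply, smul_smul, mul_comm]

noncomputable def homFDRep (χ : G →* ℂˣ) : FDRep ℂ G := FDRep.of (homRep χ)

lemma homFDRep_character (χ : G →* ℂˣ) :
    (homFDRep χ).character = fun g => (χ g : ℂ) := by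
  funext g
  show LinearMap.trace ℂ _ ((homRep χ) g) = _
  show LinearMap.trace ℂ ℂ ((χ g : ℂ) • LinearMap.id) = _
  rw [map_smul, LinearMap.trace_id]
  simp [Module.finrank_self]

end aux
section aux2
variable {G : Type} [Group G]
lemma finrank_homFDRep (χ : G →* ℂˣ) : Module.finrank ℂ (homFDRep χ) = 1 :=
  Module.finrank_self ℂ




lemma fdrep_hom_comm_apply {A B : FDRep ℂ G} (f : A ⟶ B) (g : G) (x : A.V) :
    f.hom (A.ρ g x) = B.ρ g (f.hom x) :=
  LinearMap.ext_iff.1 (congrArg (fun φ => φ.hom.hom) (f.comm g)) x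

lemma simple_of_finrank_one (V : FDRep ℂ G) (hV : Module.finrank ℂ V = 1) :
    Simple V := by
  constructor
  intro Y f hm
  constructor
  · intro hiso h0
    have h1 : 𝟙 V = 0 := by
      rw [← (asIso f).inv_hom_id, show (asIso f).hom = 0 from h0, comp_zero]
    have h2 : (𝟙 V : V ⟶ V).hom = (0 : V ⟶ V).hom := by rw [h1]
    rw [Action.id_hom, Action.zero_hom] at h2
    have hz : ∀ v : V, v = 0 := by
      intro v
      have h3 := LinearMap.ext_iff.1 (congrArg (fun φ => φ.hom.hom) h2) v
      simpa using h3
    have : Subsingleton V := ⟨fun a b => by rw [hz a, hz b]⟩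
    rw [Module.finrank_zero_of_subsingleton] at hV
    exact one_ne_zero hV.symm
  · intro hf
    have hfhom : (f.hom.hom.hom : Y →ₗ[ℂ] V) ≠ 0 := fun h => hf (Action.Hom.ext (FGModuleCat.hom_ext (by rw [h]; rfl)))
    -- the kernel is G-invariant
    have hker : ∀ g : G, ∀ y ∈ LinearMap.ker f.hom.hom.hom, Y.ρ g y ∈ LinearMap.ker f.hom.hom.hom := by
      intro g y hy
      simp only [LinearMap.mem_ker] at hy ⊢
      exact (fdrep_hom_comm_apply f g y).trans ((congrArg (V.ρ g) hy).trans (map_zero _))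
    -- the kernel subrepresentation
    let ρK : Representation ℂ G (LinearMap.ker f.hom.hom.hom) :=
      { toFun := fun g => (Y.ρ g).restrict (hker g)
        map_one' := by
          apply LinearMap.ext; intro x; apply Subtype.ext
          simp [LinearMap.restrict_apply]
        map_mul' := fun g h => by
          apply LinearMap.ext; intro x; apply Subtype.ext
          show Y.ρ (g * h) x.val = ((Y.ρ g).restrict (hker g) ((Y.ρ h).restrict (hker h) x)).val
          rw [map_mul]
          rfl }
    let K : FDRep ℂ G := FDRep.of ρK
    obtain ⟨i, hihom⟩ : ∃ i : K ⟶ Y, i.hom.hom.hom = (LinearMap.ker f.hom.hom.hom).subtype := by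
      refine ⟨⟨FGModuleCat.ofHom (LinearMap.ker f.hom.hom.hom).subtype, fun g => ?_⟩, rfl⟩
      apply FGModuleCat.hom_ext
      apply LinearMap.ext; intro x
      rfl
    have hcomp : i ≫ f = 0 := by
      apply Action.Hom.ext
      rw [Action.comp_hom, Action.zero_hom]
      apply FGModuleCat.hom_ext
      apply LinearMap.ext
      intro x
      show f.hom.hom.hom (i.hom.hom.hom x) = 0; rw [hihom]; exact x.2
    have hi : i = 0 := (cancel_mono f).mp (by rw [hcomp, zero_comp])
    have hker0 : LinearMap.ker f.hom.hom.hom = ⊥ := by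
      rw [Submodule.eq_bot_iff]
      intro x hx
      have h4 : i.hom.hom.hom = 0 := by rw [hi, Action.zero_hom]; rfl
      rw [hihom] at h4
      have := LinearMap.ext_iff.1 h4 ⟨x, hx⟩
      simpa using this
    have hinj : Function.Injective f.hom.hom.hom := LinearMap.ker_eq_bot.mp hker0
    have hsurj : Function.Surjective f.hom.hom.hom := by
      rw [← LinearMap.range_eq_top]
      have hne : LinearMap.range f.hom.hom.hom ≠ ⊥ := fun h => hfhom (LinearMap.range_eq_bot.mp h)
      apply Submodule.eq_top_of_finrank_eq
      have hle : Module.finrank ℂ (LinearMap.range f.hom.hom.hom) ≤ Module.finrank ℂ V :=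
        Submodule.finrank_le _
      have hpos : 0 < Module.finrank ℂ (LinearMap.range f.hom.hom.hom) := by
        rw [Module.finrank_pos_iff]
        exact Submodule.nontrivial_iff_ne_bot.mpr hne
      rw [hV] at hle
      exact (le_antisymm hle hpos).trans hV.symm
    let e : Y ≃ₗ[ℂ] V := LinearEquiv.ofBijective f.hom.hom.hom ⟨hinj, hsurj⟩
    have h6 : ∀ z, f.hom.hom.hom (e.symm z) = z := fun z => e.apply_symm_apply z
    obtain ⟨ginv, hghom⟩ : ∃ ginv : V ⟶ Y, ginv.hom.hom.hom = (e.symm : V →ₗ[ℂ] Y) := by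
      refine ⟨⟨FGModuleCat.ofHom (e.symm : V →ₗ[ℂ] Y), fun g => ?_⟩, rfl⟩
      apply FGModuleCat.hom_ext
      apply LinearMap.ext; intro x
      apply hinj
      calc f.hom.hom.hom (e.symm (V.ρ g x)) = V.ρ g x := h6 _
        _ = V.ρ g (f.hom.hom.hom (e.symm x)) := by rw [h6]
        _ = f.hom.hom.hom (Y.ρ g (e.symm x)) := (fdrep_hom_comm_apply f g (e.symm x)).symm
    have h7 : f ≫ ginv = 𝟙 Y := by
      apply Action.Hom.ext
      rw [Action.comp_hom, Action.id_hom]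
      apply FGModuleCat.hom_ext
      apply LinearMap.ext; intro x
      show ginv.hom.hom.hom (f.hom.hom.hom x) = x; rw [hghom]; exact e.symm_apply_apply x
    have h8 : ginv ≫ f = 𝟙 V := by
      apply Action.Hom.ext
      rw [Action.comp_hom, Action.id_hom]
      apply FGModuleCat.hom_ext
      apply LinearMap.ext; intro x
      show f.hom.hom.hom (ginv.hom.hom.hom x) = x; rw [hghom]; exact h6 x
    exact ⟨⟨ginv, h7, h8⟩⟩

end aux2
section aux3
variable {G : Type} [Group G] [Fintype G]


lemma orderOf_hom_eq_card_range (χ : G →* ℂˣ) :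
    orderOf χ = Nat.card χ.range := by
  haveI : Finite χ.range :=
    Set.Finite.to_subtype (by rw [MonoidHom.coe_range]; exact Set.finite_range χ)
  haveI : IsCyclic χ.range := subgroup_units_cyclic _
  rw [← IsCyclic.exponent_eq_card]
  apply Nat.dvd_antisymm
  · apply orderOf_dvd_of_pow_eq_one
    ext g
    have h1 : (⟨χ g, ⟨g, rfl⟩⟩ : χ.range) ^ Monoid.exponent χ.range = 1 :=
      Monoid.pow_exponent_eq_one _
    have h2 := congrArg Subtype.val h1
    push_cast at h2
    exact_mod_cast h2
  · apply Monoid.exponent_dvd_of_forall_pow_eq_one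
    rintro ⟨-, g, rfl⟩
    apply Subtype.ext
    push_cast
    have : (χ ^ orderOf χ) g = (1 : G →* ℂˣ) g := by rw [pow_orderOf_eq_one]
    rw [MonoidHom.pow_apply, MonoidHom.one_apply] at this
    exact_mod_cast this

lemma cod_hom_eq_orderOf (χ : G →* ℂˣ) :
    cod G (fun g => (χ g : ℂ)) = orderOf χ := by
  have hker : kerSet G (fun g => (χ g : ℂ)) = (χ.ker : Set G) := by
    ext g
    simp [kerSet, MonoidHom.mem_ker, ← Units.val_eq_one]
  have hdeg : charDeg G (fun g => (χ g : ℂ)) = 1 := by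
    simp [charDeg]
  rw [cod, hker, hdeg, Nat.div_one]
  have h1 : ((χ.ker : Set G)).ncard = Nat.card χ.ker := by
    rw [← Nat.card_coe_set_eq]
    rfl
  rw [h1]
  have h2 : Fintype.card G = Nat.card (G ⧸ χ.ker) * Nat.card χ.ker := by
    rw [← Nat.card_eq_fintype_card]
    exact Subgroup.card_eq_card_quotient_mul_card_subgroup χ.ker
  have h3 : 0 < Nat.card χ.ker := Nat.card_pos
  rw [h2, Nat.mul_div_cancel _ h3, orderOf_hom_eq_card_range]
  exact Nat.card_congr (QuotientGroup.quotientKerEquivRange χ).toEquiv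

end aux3

/-- A finite abelian `T'_k`-group is elementary abelian or cyclic of order 4. -/
theorem abelian_Tk' (G : Type) [CommGroup G] [Fintype G] (k : ℕ) (hk : 1 ≤ k)
    (h : IsTk' G k) :
    (∃ p : ℕ, p.Prime ∧ ∀ g : G, g ^ p = 1) ∨
      Nonempty (G ≃* Multiplicative (ZMod 4)) := by
  obtain ⟨d₀, hd₀, hmult, huniq⟩ := h
  have hIrr : ∀ χ : G →* ℂˣ, (fun g => (χ g : ℂ)) ∈ Irr G := fun χ =>
    ⟨homFDRep χ, simple_of_finrank_one _ (finrank_homFDRep χ), (homFDRep_character χ).symm⟩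
  have main : ∀ χ ψ : G →* ℂˣ, χ ≠ ψ → orderOf χ = orderOf ψ → orderOf χ = d₀ := by
    intro χ ψ hne horder
    by_contra hd
    have h1 : orderOf χ ∈ codSet G := ⟨_, hIrr χ, cod_hom_eq_orderOf χ⟩
    obtain ⟨a, ha⟩ := Set.ncard_eq_one.mp (huniq _ h1 hd)
    have hχ : (fun g => (χ g : ℂ)) ∈ {f ∈ Irr G | cod G f = orderOf χ} :=
      ⟨hIrr χ, cod_hom_eq_orderOf χ⟩
    have hψ : (fun g => (ψ g : ℂ)) ∈ {f ∈ Irr G | cod G f = orderOf χ} :=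
      ⟨hIrr ψ, by rw [cod_hom_eq_orderOf ψ, horder]⟩
    rw [ha] at hχ hψ
    apply hne
    have h2 : (fun g => ((χ g : ℂ))) = fun g => ((ψ g : ℂ)) := hχ.trans hψ.symm
    ext g
    have h3 := congrFun h2 g
    exact_mod_cast h3
  haveI : NeZero (Monoid.exponent G) := ⟨Monoid.exponent_ne_zero_of_finite⟩
  haveI : NeZero ((Monoid.exponent G : ℂ)) :=
    ⟨Nat.cast_ne_zero.mpr Monoid.exponent_ne_zero_of_finite⟩
  obtain ⟨e⟩ := CommGroup.monoidHom_mulEquiv_of_hasEnoughRootsOfUnity G ℂ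
  have mainG : ∀ x y : G, x ≠ y → orderOf x = orderOf y → orderOf x = d₀ := by
    intro x y hxy horder
    have h1 : e.symm x ≠ e.symm y := fun hc => hxy (by simpa using congrArg e hc)
    have h2 : orderOf (e.symm x) = orderOf x := e.symm.orderOf_eq x
    have h3 : orderOf (e.symm y) = orderOf y := e.symm.orderOf_eq y
    have := main _ _ h1 (by rw [h2, h3, horder])
    rwa [h2] at this
  have horder2 : ∀ x : G, 2 < orderOf x → orderOf x = d₀ := by
    intro x hx
    have hne : x ≠ x⁻¹ := by
      intro hc
      have h1 : x ^ 2 = 1 := by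
        rw [pow_two]; nth_rewrite 2 [hc]; rw [mul_inv_cancel]
      have h2 : orderOf x ∣ 2 := orderOf_dvd_of_pow_eq_one h1
      have := Nat.le_of_dvd (by norm_num) h2
      omega
    exact mainG x x⁻¹ hne (orderOf_inv x).symm
  by_cases hbig : ∃ x : G, 2 < orderOf x
  · obtain ⟨x, hx2⟩ := hbig
    have hxd : orderOf x = d₀ := horder2 x hx2
    have hd3 : 2 < d₀ := hxd ▸ hx2
    have hdvd : ∀ m, m ∣ d₀ → m = 1 ∨ m = 2 ∨ m = d₀ := by
      intro m hm
      by_contra hc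
      push_neg at hc
      obtain ⟨h1, h2, h3⟩ := hc
      have hd0 : d₀ ≠ 0 := by omega
      have hm0 : m ≠ 0 := by
        intro h; subst h; exact hd0 (Nat.eq_zero_of_zero_dvd hm)
      have hy : orderOf (x ^ (d₀ / m)) = m := by
        rw [← hxd] at hm ⊢
        exact orderOf_pow_orderOf_div (by omega) hm
      have hm3 : 2 < m := by omega
      have := horder2 (x ^ (d₀ / m)) (by omega)
      rw [hy] at this
      exact h3 this
    by_cases hp : Nat.Prime d₀
    · left
      refine ⟨d₀, hp, fun g => ?_⟩
      have hpos : 0 < orderOf g := orderOf_pos g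
      have hcases : orderOf g ≤ 2 ∨ orderOf g = d₀ := by
        by_cases hg : 2 < orderOf g
        · right; exact horder2 g hg
        · left; omega
      rcases hcases with hg | hg
      · rcases (by omega : orderOf g = 1 ∨ orderOf g = 2) with hg1 | hg2
        · rw [orderOf_eq_one_iff] at hg1
          rw [hg1, one_pow]
        · exfalso
          have hcop : (orderOf g).Coprime (orderOf x) := by
            rw [hg2, hxd]
            exact (Nat.coprime_primes Nat.prime_two hp).mpr (by omega)
          have hmul := (Commute.all g x).orderOf_mul_eq_mul_orderOf_of_coprime hcop
          rw [hg2, hxd] at hmul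
          have h4 : 2 < orderOf (g * x) := by rw [hmul]; omega
          have h5 := horder2 _ h4
          rw [hmul] at h5
          omega
      · exact orderOf_dvd_iff_pow_eq_one.mp (hg ▸ dvd_refl d₀)
    · right
      have h4 : d₀ = 4 := by
        obtain ⟨m, hm, hm2, hmlt⟩ := Nat.exists_dvd_of_not_prime2 (by omega) hp
        have hmv := hdvd m hm
        have hm2' : m = 2 := by omega
        subst hm2'
        obtain ⟨c, hc⟩ := hm
        have hcdvd : c ∣ d₀ := ⟨2, by omega⟩
        have := hdvd c hcdvd
        omega
      subst h4
      have hx4 : orderOf x = 4 := hxd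
      have huniq2 : ∀ a b : G, orderOf a = 2 → orderOf b = 2 → a = b := by
        intro a b ha hb
        by_contra hab
        have := mainG a b hab (by rw [ha, hb])
        rw [ha] at this
        omega
      have hxsq : orderOf (x ^ 2) = 2 := by
        rw [orderOf_pow_of_dvd two_ne_zero (by rw [hx4]; norm_num), hx4]
      have hgen : ∀ g : G, g ∈ Subgroup.zpowers x := by
        intro g
        have hpos : 0 < orderOf g := orderOf_pos g
        have hcases : orderOf g = 1 ∨ orderOf g = 2 ∨ orderOf g = 4 := by
          by_cases hg : 2 < orderOf g
          · right; right; exact horder2 g hg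
          · omega
        rcases hcases with h1 | h2 | h4'
        · rw [orderOf_eq_one_iff] at h1
          rw [h1]; exact Subgroup.one_mem _
        · rw [huniq2 g (x ^ 2) h2 hxsq]
          exact Subgroup.pow_mem _ (Subgroup.mem_zpowers x) 2
        · have hg2 : orderOf (g ^ 2) = 2 := by
            rw [orderOf_pow_of_dvd two_ne_zero (by rw [h4']; norm_num), h4']
          have hgx : g ^ 2 = x ^ 2 := huniq2 _ _ hg2 hxsq
          have hu : (g * x⁻¹) ^ 2 = 1 := by
            rw [mul_pow, inv_pow, hgx, mul_inv_cancel]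
          have hdvd2 : orderOf (g * x⁻¹) ∣ 2 := orderOf_dvd_of_pow_eq_one hu
          rcases (Nat.dvd_prime Nat.prime_two).mp hdvd2 with h1 | h2'
          · rw [orderOf_eq_one_iff, mul_inv_eq_one] at h1
            rw [h1]; exact Subgroup.mem_zpowers x
          · have h5 := huniq2 _ _ h2' hxsq
            have hg3 : g = x ^ 3 := by
              have h6 : g * x⁻¹ * x = x ^ 2 * x := by rw [h5]
              rw [inv_mul_cancel_right] at h6
              rw [h6, ← pow_succ]
            rw [hg3]
            exact Subgroup.pow_mem _ (Subgroup.mem_zpowers x) 3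
      haveI hcyc : IsCyclic G := ⟨⟨x, hgen⟩⟩
      have hcard : Nat.card G = 4 := by
        have h1 : Subgroup.zpowers x = ⊤ := by
          rw [Subgroup.eq_top_iff']; exact hgen
        have h2 : Nat.card (Subgroup.zpowers x) = orderOf x := Nat.card_zpowers x
        rw [h1, Subgroup.card_top, hx4] at h2
        exact h2
      have e2 := (zmodCyclicMulEquiv hcyc).symm
      rw [hcard] at e2
      exact ⟨e2⟩
  · left
    refine ⟨2, Nat.prime_two, fun g => ?_⟩
    push_neg at hbig
    have h1 : 0 < orderOf g := orderOf_pos g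
    have h2 := hbig g
    rcases (by omega : orderOf g = 1 ∨ orderOf g = 2) with hg1 | hg2
    · rw [orderOf_eq_one_iff] at hg1
      rw [hg1, one_pow]
    · rw [← hg2]
      exact pow_orderOf_eq_one g
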